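/- Let f be meromorphic, q₀ ≥ 2, q_k ≥ 1, k ≥ 1, g = f^{q₀}(f^{(k)})^{q_k} − 1. If z₀ is a zero of f of multiplicity q ≥ k+1, then z₀ is a zero of β = −(g'/g)/f^{q₀−1} of order at least q_k(q − k) + (q − 1). -/

import Mathlib

open MeasureTheory Filter intervalIntegral

/-- log⁺ x = max 0 (log x). -/
noncomputable def logPlus (x : ℝ) : ℝ := max 0 (Real.log x)

/-- Nevanlinna proximity function m(r, f). -/
noncomputable def nevProx (f : ℂ → ℂ) (r : ℝ) : ℝ :=
  (2 * Real.pi)⁻¹ * ∫ θ in (0 : ℝ)..(2 * Real.pi),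
    logPlus ‖f (r * Complex.exp (θ * Complex.I))‖

/-- The order of `f` at `z` as a meromorphic function (junk value `0` if not meromorphic). -/
noncomputable def morder (f : ℂ → ℂ) (z : ℂ) : WithTop ℤ := by
  classical exact if h : MeromorphicAt f z then meromorphicOrderAt f z else 0

/-- Pole multiplicity of `f` at `z`, truncated at level `m` (`m = 0` means no truncation). -/
noncomputable def poleMult (f : ℂ → ℂ) (m : ℕ) (z : ℂ) : ℕ :=
  if m = 0 then (-(morder f z).untopD 0).toNat
  else min m (-(morder f z).untopD 0).toNat

/-- Unintegrated counting function n(t, f) of poles, truncated at level `m`. -/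
noncomputable def nevSmallN (f : ℂ → ℂ) (m : ℕ) (t : ℝ) : ℝ :=
  ∑' z : ℂ, if ‖z‖ ≤ t then (poleMult f m z : ℝ) else 0

/-- Integrated counting function N(r, f) of poles, truncated at level `m`
(`m = 0`: with multiplicity, `m = 1`: reduced). -/
noncomputable def nevCountN (f : ℂ → ℂ) (m : ℕ) (r : ℝ) : ℝ :=
  (∫ t in (0 : ℝ)..r, (nevSmallN f m t - nevSmallN f m 0) / t) +
    nevSmallN f m 0 * Real.log r

/-- Nevanlinna characteristic function T(r, f). -/
noncomputable def nevT (f : ℂ → ℂ) (r : ℝ) : ℝ := nevProx f r + nevCountN f 0 r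

/-- `f` is a transcendental meromorphic function on ℂ. -/
def TranscendentalMeromorphic (f : ℂ → ℂ) : Prop :=
  MeromorphicOn f Set.univ ∧
    ¬ ∃ p q : Polynomial ℂ, q ≠ 0 ∧ ∀ᶠ z in Filter.cofinite, f z = p.eval z / q.eval z

/-- `S` is an `S(r, f)`-type error term: `S(r) = o(T(r, f))` as `r → ∞` outside a set
`E` of finite linear measure. -/
def IsSrf (S : ℝ → ℝ) (f : ℂ → ℂ) : Prop :=
  ∃ E : Set ℝ, volume E ≠ ⊤ ∧ S =o[atTop ⊓ Filter.principal Eᶜ] nevT f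

/-- `a` is a small function with respect to `f`. -/
def SmallFunctionOf (a f : ℂ → ℂ) : Prop :=
  MeromorphicOn a Set.univ ∧ (¬ ∀ᶠ z in Filter.cofinite, a z = 0) ∧ IsSrf (nevT a) f

/-!
In characteristic zero, differentiation lowers a nonzero meromorphic order by exactly one, so
`f^{(k)}` has order `q - k` at `z₀` and `P = f^{q₀} (f^{(k)})^{q_k}` has order
`N = q q₀ + q_k (q - k) > 0`. Then `g = P - 1` tends to `-1`, so `g'/g = P'/(P - 1)` has order
`N - 1`, and dividing by `f^{q₀-1}` leaves `N - 1 - q (q₀ - 1) = q_k (q - k) + q - 1`; the bound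
is in fact an equality.
-/

theorem morder_eq_meromorphicOrderAt (f : ℂ → ℂ) (z : ℂ) :
    morder f z = meromorphicOrderAt f z := by
  unfold morder
  split_ifs with h
  · rfl
  · exact (meromorphicOrderAt_of_not_meromorphicAt h).symm

section

variable {𝕜 : Type*} [NontriviallyNormedField 𝕜] {x : 𝕜}
  {E : Type*} [NormedAddCommGroup E] [NormedSpace 𝕜 E]

theorem meromorphicOrderAt_iteratedDeriv [CharZero 𝕜] [CompleteSpace E] {f : 𝕜 → E} {n : ℤ}
    {k : ℕ} (hn : ∀ j < k, n ≠ j) (hf : meromorphicOrderAt f x = n) :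
    meromorphicOrderAt (iteratedDeriv k f) x = ↑(n - k) := by
  induction k with
  | zero => simpa using hf
  | succ k ih =>
    rw [iteratedDeriv_succ, Nat.cast_succ, ← sub_sub]
    refine meromorphicOrderAt_deriv_eq_sub_one ?_ (ih fun j hj ↦ hn j (by omega))
    exact_mod_cast sub_ne_zero.mpr (hn k k.lt_succ_self)

theorem meromorphicOrderAt_sub_const_of_pos {f : 𝕜 → E} {c : E} (hc : c ≠ 0)
    (hf : 0 < meromorphicOrderAt f x) :
    meromorphicOrderAt (fun z ↦ f z - c) x = 0 := by
  classical
  have hconst : meromorphicOrderAt (fun _ ↦ -c) x = 0 := by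
    simp [meromorphicOrderAt_const, hc]
  simp_rw [sub_eq_add_neg]
  rw [← hconst]
  exact meromorphicOrderAt_add_eq_right_of_lt
    (meromorphicAt_of_meromorphicOrderAt_ne_zero hf.ne') (hconst ▸ hf)

theorem meromorphicOrderAt_logDeriv_sub_const [CharZero 𝕜] [CompleteSpace 𝕜] {f : 𝕜 → 𝕜}
    {c : 𝕜} {n : ℤ} (hc : c ≠ 0) (hn : 0 < n) (hf : meromorphicOrderAt f x = n) :
    meromorphicOrderAt (logDeriv fun z ↦ f z - c) x = ↑(n - 1) := by
  have hfm : MeromorphicAt f x :=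
    meromorphicAt_of_meromorphicOrderAt_ne_zero (by simp [hf, hn.ne'])
  have hderiv : deriv (fun z ↦ f z - c) = deriv f := funext fun z ↦ deriv_sub_const c
  rw [logDeriv, meromorphicOrderAt_div (hderiv ▸ hfm.deriv) (hfm.fun_sub (.const c x)), hderiv,
    meromorphicOrderAt_deriv_eq_sub_one (by exact_mod_cast hn.ne') hf,
    meromorphicOrderAt_sub_const_of_pos hc (by simp [hf, hn]), sub_zero]

end

theorem stmt16_general (f : ℂ → ℂ) (hf : MeromorphicOn f Set.univ)
    (q₀ qk k : ℕ) (hq₀ : 2 ≤ q₀)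
    (g β : ℂ → ℂ)
    (hg : ∀ z, g z = (f z) ^ q₀ * (iteratedDeriv k f z) ^ qk - 1)
    (hβ : ∀ z, β z = -(deriv g z / g z) / (f z) ^ (q₀ - 1))
    (z₀ : ℂ) (q : ℕ) (hq : k + 1 ≤ q) (hzero : morder f z₀ = ((q : ℤ) : ℤ)) :
    (((qk : ℤ) * ((q : ℤ) - (k : ℤ)) + ((q : ℤ) - 1) : ℤ) : WithTop ℤ) ≤ morder β z₀ := by
  rw [morder_eq_meromorphicOrderAt] at hzero ⊢
  have hfm : MeromorphicAt f z₀ := hf z₀ trivial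
  have hfk : meromorphicOrderAt (iteratedDeriv k f) z₀ = ↑((q : ℤ) - k) :=
    meromorphicOrderAt_iteratedDeriv (fun j hj ↦ by omega) hzero
  have hfkm : MeromorphicAt (iteratedDeriv k f) z₀ :=
    meromorphicAt_of_meromorphicOrderAt_ne_zero <| by
      rw [hfk]; exact_mod_cast (by omega : (q : ℤ) - k ≠ 0)
  have hP : meromorphicOrderAt (fun z ↦ f z ^ q₀ * iteratedDeriv k f z ^ qk) z₀ =
      ↑(q₀ * (q : ℤ) + qk * ((q : ℤ) - k)) := by
    rw [fun_meromorphicOrderAt_mul (hfm.fun_pow q₀) (hfkm.fun_pow qk),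
      fun_meromorphicOrderAt_pow hfm, fun_meromorphicOrderAt_pow hfkm, hzero, hfk]
    norm_cast
  have hPpos : 0 < q₀ * (q : ℤ) + qk * ((q : ℤ) - k) := by
    have : 0 ≤ (qk : ℤ) * ((q : ℤ) - k) := mul_nonneg (by positivity) (by omega)
    nlinarith
  have hlog : meromorphicOrderAt (logDeriv g) z₀ = ↑(q₀ * (q : ℤ) + qk * ((q : ℤ) - k) - 1) := by
    rw [funext hg]
    exact meromorphicOrderAt_logDeriv_sub_const one_ne_zero hPpos hP
  have hlogm : MeromorphicAt (logDeriv g) z₀ :=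
    funext hg ▸ ((hfm.fun_pow q₀).fun_mul (hfkm.fun_pow qk)).fun_sub (.const 1 z₀) |>.logDeriv
  rw [show β = -logDeriv g / fun z ↦ f z ^ (q₀ - 1) from funext hβ,
    meromorphicOrderAt_div hlogm.neg (hfm.fun_pow _), ← meromorphicOrderAt_neg, hlog,
    fun_meromorphicOrderAt_pow hfm, hzero, ← WithTop.coe_natCast, ← WithTop.coe_mul,
    ← WithTop.LinearOrderedAddCommGroup.coe_sub, WithTop.coe_le_coe, Nat.cast_pred (by omega)]
  linarith

theorem stmt16 (f : ℂ → ℂ) (hf : MeromorphicOn f Set.univ)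
    (q₀ qk k : ℕ) (hq₀ : 2 ≤ q₀) (hqk : 1 ≤ qk) (hk : 1 ≤ k)
    (g β : ℂ → ℂ)
    (hg : ∀ z, g z = (f z) ^ q₀ * (iteratedDeriv k f z) ^ qk - 1)
    (hβ : ∀ z, β z = -(deriv g z / g z) / (f z) ^ (q₀ - 1))
    (z₀ : ℂ) (q : ℕ) (hq : k + 1 ≤ q) (hzero : morder f z₀ = ((q : ℤ) : ℤ)) :
    (((qk : ℤ) * ((q : ℤ) - (k : ℤ)) + ((q : ℤ) - 1) : ℤ) : WithTop ℤ) ≤ morder β z₀ :=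
  stmt16_general f hf q₀ qk k hq₀ g β hg hβ z₀ q hq hzero
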